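/- arXiv:2001.00653 — 3 statements merged into one kernel-verified Lean document; each statement's English description precedes it below -/
import Mathlib

section
/- For every integer d ≥ 1 and real λ > 0, (2(1+λ)^d - (1+λ))((1+2λ)^d + (1+λ)^d) < (3(1+2λ)^d - (1+2λ))(1+λ)^d. -/
/-!
With `A = (1 + λ)^d` and `B = (1 + 2λ)^d`, the difference of the two sides is
`A (B + 1 - 2A) + (1 + λ)(B - A)`. The first term is nonnegative by midpoint convexity of
`x ↦ x^d` at `1` and `1 + 2λ`, i.e. `2(1 + λ)^d ≤ (1 + 2λ)^d + 1`, and the second is positive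
since `d ≥ 1`.
-/

lemma two_mul_midpoint_pow_le {a b : ℝ} (ha : 0 ≤ a) (hb : 0 ≤ b) (n : ℕ) :
    2 * ((a + b) / 2) ^ n ≤ a ^ n + b ^ n := by
  have h := (convexOn_pow n).2 (Set.mem_Ici.2 ha) (Set.mem_Ici.2 hb)
    (by norm_num : (0 : ℝ) ≤ 1 / 2) (by norm_num : (0 : ℝ) ≤ 1 / 2) (by norm_num)
  simp only [smul_eq_mul] at h
  calc 2 * ((a + b) / 2) ^ n = 2 * (1 / 2 * a + 1 / 2 * b) ^ n := by ring_nf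
    _ ≤ 2 * (1 / 2 * a ^ n + 1 / 2 * b ^ n) := by gcongr
    _ = a ^ n + b ^ n := by ring

lemma two_mul_one_add_pow_le {lam : ℝ} (hlam : 0 ≤ 1 + 2 * lam) (n : ℕ) :
    2 * (1 + lam) ^ n ≤ (1 + 2 * lam) ^ n + 1 := by
  have h := two_mul_midpoint_pow_le hlam zero_le_one n
  rwa [show (1 + 2 * lam + 1) / 2 = 1 + lam by ring, one_pow] at h

lemma lt_of_two_mul_le_add_one {lam A B : ℝ} (hlam : 0 < 1 + lam) (hA : 0 ≤ A) (hAB : A < B)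
    (h : 2 * A ≤ B + 1) :
    (2 * A - (1 + lam)) * (B + A) < (3 * B - (1 + 2 * lam)) * A := by
  have key : (3 * B - (1 + 2 * lam)) * A - (2 * A - (1 + lam)) * (B + A)
      = A * (B + 1 - 2 * A) + (1 + lam) * (B - A) := by ring
  have : 0 ≤ A * (B + 1 - 2 * A) := mul_nonneg hA (by linarith)
  have : 0 < (1 + lam) * (B - A) := mul_pos hlam (by linarith)
  linarith

theorem stmt_5 (d : ℕ) (hd : 1 ≤ d) (lam : ℝ) (hlam : 0 < lam) :
    (2 * (1 + lam) ^ d - (1 + lam)) * ((1 + 2 * lam) ^ d + (1 + lam) ^ d)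
      < (3 * (1 + 2 * lam) ^ d - (1 + 2 * lam)) * (1 + lam) ^ d :=
  lt_of_two_mul_le_add_one (by linarith) (by positivity)
    (pow_lt_pow_left₀ (by linarith) (by linarith) (by omega))
    (two_mul_one_add_pow_le (by linarith) d)
end

section
/- Let r ≥ 3 and let d > r be prime. Define the hypergraph H(r,d) with vertex set V = V_1 ∪ ... ∪ V_r, disjoint copies of Z/dZ, and edges all r-tuples (x_1,...,x_r) with x_i ∈ V_i satisfying x_k ≡ x_1 + (k−2)x_2 (mod d) for all 3 ≤ k ≤ r. Then H(r,d) is an r-uniform, d-regular, linear hypergraph on rd vertices. -/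
/-!
Edges of `H(r,d)` are indexed by `x ∈ 𝔽_d²`, and the coordinate of edge `x` in part `i` is the
linear form `ℓᵢ(x) = x₁`, `x₂` or `x₁ + (i - 1) x₂`. Each `ℓᵢ` is nonzero, so each of its fibres
has `d` points: this is regularity. Any two of the forms are linearly independent, since the
determinants involved are `1`, `-1`, `j - 1` and `j - i` with `i < j < r < d`; hence two
coordinates determine the edge, which is linearity.
-/

/-- The `r`-partite hypergraph `H(r,d)`: parts are `r` disjoint copies of `ZMod d`,
and the edges are all `r`-tuples `(x₁, …, x_r)` with `x_k = x₁ + (k-2)·x₂` for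
`3 ≤ k ≤ r` (with 1-based part index `k = i + 1` for `i : Fin r`). -/
def Hrd (r d : ℕ) [NeZero d] : Finset (Finset (Fin r × ZMod d)) :=
  (Finset.univ : Finset (ZMod d × ZMod d)).image
    (fun x => Finset.univ.image (fun i : Fin r =>
      (i, if i.val = 0 then x.1 else if i.val = 1 then x.2
          else x.1 + ((i.val - 1 : ℕ) : ZMod d) * x.2)))

open Finset

section LinearForms

variable {K : Type*} [Field K]

lemma card_filter_linear_eq_of_left_ne_zero [Fintype K] [DecidableEq K] {α : K} (hα : α ≠ 0)
    (β a : K) :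
    #{x : K × K | α * x.1 + β * x.2 = a} = Fintype.card K := by
  rw [← card_univ]
  refine card_nbij' Prod.snd (fun t => (α⁻¹ * (a - β * t), t)) ?_ ?_ ?_ ?_
  · exact fun _ _ => mem_coe.2 (mem_univ _)
  · intro t _
    simp only [coe_filter, Set.mem_ofPred_eq, mem_univ, true_and]
    field_simp
    ring
  · intro x hx
    simp only [coe_filter, Set.mem_ofPred_eq, mem_univ, true_and] at hx
    ext
    · field_simp
      linear_combination -hx
    · rfl
  · exact fun _ _ => rfl

lemma card_filter_linear_eq [Fintype K] [DecidableEq K] {p : K × K} (hp : p ≠ 0) (a : K) :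
    #{x : K × K | p.1 * x.1 + p.2 * x.2 = a} = Fintype.card K := by
  by_cases h₁ : p.1 = 0
  · have h₂ : p.2 ≠ 0 := fun h₂ => hp (Prod.ext h₁ h₂)
    rw [← card_filter_linear_eq_of_left_ne_zero h₂ p.1 a]
    refine card_equiv (Equiv.prodComm K K) fun x => ?_
    simp [add_comm]
  · exact card_filter_linear_eq_of_left_ne_zero h₁ p.2 a

lemma eq_of_linear_eq_of_det_ne_zero {a b c e : K} (hdet : a * e - b * c ≠ 0) {x y : K × K}
    (h₁ : a * x.1 + b * x.2 = a * y.1 + b * y.2) (h₂ : c * x.1 + e * x.2 = c * y.1 + e * y.2) :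
    x = y :=
  Prod.ext (mul_left_cancel₀ hdet (by linear_combination e * h₁ - b * h₂))
    (mul_left_cancel₀ hdet (by linear_combination a * h₂ - c * h₁))

end LinearForms

lemma ZMod.natCast_ne_natCast_of_lt {d m n : ℕ} (hm : m < d) (hn : n < d) (hmn : m ≠ n) :
    (m : ZMod d) ≠ n := by
  rwa [Ne, ZMod.natCast_eq_natCast_iff', Nat.mod_eq_of_lt hm, Nat.mod_eq_of_lt hn]

namespace Hrd

variable {r d : ℕ}

def coeff (d : ℕ) (i : Fin r) : ZMod d × ZMod d :=
  if i.val = 0 then (1, 0) else if i.val = 1 then (0, 1) else (1, ((i.val - 1 : ℕ) : ZMod d))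

def coord (x : ZMod d × ZMod d) (i : Fin r) : ZMod d :=
  (coeff d i).1 * x.1 + (coeff d i).2 * x.2

def edge (r : ℕ) (x : ZMod d × ZMod d) : Finset (Fin r × ZMod d) :=
  univ.image fun i => (i, coord x i)

lemma eq_image_edge [NeZero d] : Hrd r d = univ.image (edge r) := by
  unfold Hrd edge coord coeff
  congr! 4 with x _ i
  split_ifs <;> simp

lemma mem_edge {x : ZMod d × ZMod d} {v : Fin r × ZMod d} :
    v ∈ edge r x ↔ v.2 = coord x v.1 := by
  simp only [edge, mem_image, mem_univ, true_and]
  exact ⟨fun ⟨i, hi⟩ => hi ▸ rfl, fun h => ⟨v.1, Prod.ext rfl h.symm⟩⟩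

lemma card_edge (x : ZMod d × ZMod d) : #(edge r x) = r := by
  rw [edge, card_image_of_injective _ fun i j h => (Prod.mk.inj h).1, card_univ, Fintype.card_fin]

lemma edge_injective (hr : 2 ≤ r) : Function.Injective (edge r (d := d)) := by
  intro x y h
  have hcoord (i : Fin r) : coord x i = coord y i :=
    mem_edge.1 (h ▸ (mem_edge.2 rfl : (i, coord x i) ∈ edge r x))
  exact Prod.ext (by simpa [coord, coeff] using hcoord ⟨0, by omega⟩)
    (by simpa [coord, coeff] using hcoord ⟨1, by omega⟩)

lemma coeff_ne_zero [Nontrivial (ZMod d)] (i : Fin r) : coeff d i ≠ 0 := by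
  unfold coeff
  split_ifs <;> simp

lemma det_coeff_ne_zero (hrd : r < d) {i j : Fin r} (hij : i < j) :
    (coeff d i).1 * (coeff d j).2 - (coeff d i).2 * (coeff d j).1 ≠ 0 := by
  have hi := i.isLt
  have hj := j.isLt
  rw [Fin.lt_def] at hij
  have : Fact (1 < d) := ⟨by omega⟩
  unfold coeff
  split_ifs <;> simp only [mul_one, mul_zero, one_mul, zero_mul, sub_zero, zero_sub] <;>
    first | omega | simp
  · simpa using ZMod.natCast_ne_natCast_of_lt (n := 0) (by omega : j.val - 1 < d) (by omega)
      (by omega)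
  · exact sub_ne_zero.2 (ZMod.natCast_ne_natCast_of_lt (by omega) (by omega) (by omega))

lemma eq_of_coord_eq [Fact d.Prime] (hrd : r < d) {i j : Fin r} (hij : i ≠ j)
    {x y : ZMod d × ZMod d} (hi : coord x i = coord y i) (hj : coord x j = coord y j) : x = y := by
  rcases hij.lt_or_gt with hlt | hlt
  · exact eq_of_linear_eq_of_det_ne_zero (det_coeff_ne_zero hrd hlt) hi hj
  · exact eq_of_linear_eq_of_det_ne_zero (det_coeff_ne_zero hrd hlt) hj hi

end Hrd

open Hrd in
theorem stmt_12 (r d : ℕ) (hr : 3 ≤ r) (hd : d.Prime) (hrd : r < d) [NeZero d] :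
    Fintype.card (Fin r × ZMod d) = r * d ∧
    (∀ e ∈ Hrd r d, e.card = r) ∧
    (∀ v : Fin r × ZMod d, ((Hrd r d).filter (fun e => v ∈ e)).card = d) ∧
    (∀ u v : Fin r × ZMod d, u ≠ v →
      ((Hrd r d).filter (fun e => u ∈ e ∧ v ∈ e)).card ≤ 1) := by
  have := Fact.mk hd
  have hinj := edge_injective (d := d) (by omega : 2 ≤ r)
  refine ⟨by simp [ZMod.card], ?_, fun v => ?_, fun u v huv => ?_⟩
  · rw [eq_image_edge, forall_mem_image]
    exact fun x _ => card_edge x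
  · rw [eq_image_edge, filter_image, card_image_of_injective _ hinj]
    simp only [mem_edge, eq_comm (a := v.2)]
    exact (card_filter_linear_eq (coeff_ne_zero v.1) v.2).trans (ZMod.card d)
  · rw [eq_image_edge, filter_image, card_image_of_injective _ hinj, card_le_one_iff]
    intro x y hx hy
    simp only [mem_filter, mem_univ, true_and, mem_edge] at hx hy
    have hne : u.1 ≠ v.1 := fun h => huv (Prod.ext h (by rw [hx.1, hx.2, h]))
    exact eq_of_coord_eq hrd hne (hx.1.symm.trans hy.1) (hx.2.symm.trans hy.2)
end

section
/- For the tripartite hypergraph K on 3d² vertices defined by parts A, B, C each of size d² and hyperedges {a_{kd+i}, b_{kd+j}, c_{id+j}} for 0 ≤ k ≤ d−1, 1 ≤ i,j ≤ d, the number of strong independent sets satisfies i_2(K) ≥ (2^{d+1} − 1)^d, and hence log₂ i_2(K)/(3d²) ≥ 1/3 + 1/(6d) − o(1/d). -/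
/-!
Two vertices of `A ∪ B` lie in a common hyperedge exactly when they are `a_{(k,i)}` and
`b_{(k,j)}` for some `k`, so these adjacencies form `d` disjoint copies of `K_{d,d}`, and every
hyperedge meets `A ∪ B` in such a pair. Choosing independently in each copy one of its
`2^{d+1} - 1` independent sets therefore yields distinct strong independent sets, whence
`i₂(K) ≥ (2^{d+1} - 1)^d`. As `2^{d+1} - 1 ≥ 2^{d+1/2}` for `d ≥ 1`, this gives
`log₂ i₂(K) ≥ d (d + 1/2)`, i.e. the second bound holds with no error term.
-/

open Filter

/-- The tripartite hypergraph `K` on `3d²` vertices: parts `A`, `B`, `C` (indexed by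
`Fin 3`), each indexed by pairs in `Fin d × Fin d` (the pair `(k, i)` encodes the
index `k·d + i`), with hyperedges `{a_{(k,i)}, b_{(k,j)}, c_{(i,j)}}` for all
`k, i, j`. -/
def Kedges (d : ℕ) : Finset (Finset (Fin 3 × Fin d × Fin d)) :=
  (Finset.univ : Finset (Fin d × Fin d × Fin d)).image
    (fun t => {(0, (t.1, t.2.1)), (1, (t.1, t.2.2)), (2, (t.2.1, t.2.2))})

/-- The number of strong independent sets of `K`. -/
def Kcount (d : ℕ) : ℕ :=
  ((Finset.univ : Finset (Finset (Fin 3 × Fin d × Fin d))).filter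
    (fun I => ∀ e ∈ Kedges d, (I ∩ e).card ≤ 1)).card

open Finset

theorem card_filter_eq_empty_or_eq_empty (α β : Type*) [Fintype α] [Fintype β]
    [DecidableEq α] [DecidableEq β] :
    #{p : Finset α × Finset β | p.1 = ∅ ∨ p.2 = ∅} =
      2 ^ Fintype.card α + 2 ^ Fintype.card β - 1 := by
  have hleft : ({p : Finset α × Finset β | p.1 = ∅} : Finset _) = {∅} ×ˢ univ := by
    ext ⟨s, t⟩; simp [eq_comm]
  have hright : ({p : Finset α × Finset β | p.2 = ∅} : Finset _) = univ ×ˢ {∅} := by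
    ext ⟨s, t⟩; simp [eq_comm]
  have hboth : ({p : Finset α × Finset β | p.1 = ∅} : Finset _) ∩
      ({p : Finset α × Finset β | p.2 = ∅} : Finset _) = {(∅, ∅)} := by
    ext ⟨s, t⟩; simp
  have h := card_union_add_card_inter
    ({p : Finset α × Finset β | p.1 = ∅} : Finset _) {p | p.2 = ∅}
  rw [← filter_or, hboth, hleft, hright] at h
  simp only [card_product, card_singleton, card_univ, Fintype.card_finset, one_mul,
    mul_one] at h
  omega

abbrev KddIndepSet (d : ℕ) := {p : Finset (Fin d) × Finset (Fin d) // p.1 = ∅ ∨ p.2 = ∅}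

theorem card_kddIndepSet (d : ℕ) : Fintype.card (KddIndepSet d) = 2 ^ (d + 1) - 1 := by
  rw [Fintype.card_subtype, card_filter_eq_empty_or_eq_empty, Fintype.card_fin, pow_succ,
    mul_two]

def kddUnion (d : ℕ) (g : Fin d → KddIndepSet d) : Finset (Fin 3 × Fin d × Fin d) :=
  {v | v.1 = 0 ∧ v.2.2 ∈ (g v.2.1).1.1 ∨ v.1 = 1 ∧ v.2.2 ∈ (g v.2.1).1.2}

section kddUnion

variable {d : ℕ} (g : Fin d → KddIndepSet d) (k i : Fin d)

@[simp] theorem mem_kddUnion_zero : ((0 : Fin 3), k, i) ∈ kddUnion d g ↔ i ∈ (g k).1.1 := by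
  simp [kddUnion]

@[simp] theorem mem_kddUnion_one : ((1 : Fin 3), k, i) ∈ kddUnion d g ↔ i ∈ (g k).1.2 := by
  simp [kddUnion]

@[simp] theorem notMem_kddUnion_two : ((2 : Fin 3), k, i) ∉ kddUnion d g := by
  simp [kddUnion]

theorem kddUnion_injective : Function.Injective (kddUnion d) := by
  intro g g' h
  funext k
  refine Subtype.ext (Prod.ext ?_ ?_) <;> ext i
  · simpa using congrArg (((0 : Fin 3), k, i) ∈ ·) h
  · simpa using congrArg (((1 : Fin 3), k, i) ∈ ·) h

theorem card_inter_kddUnion_le_one {e : Finset (Fin 3 × Fin d × Fin d)} (he : e ∈ Kedges d) :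
    #(kddUnion d g ∩ e) ≤ 1 := by
  simp only [Kedges, mem_image, mem_univ, true_and] at he
  obtain ⟨⟨k, i, j⟩, rfl⟩ := he
  refine card_le_one.2 fun a ha b hb => ?_
  simp only [mem_inter, mem_insert, mem_singleton] at ha hb
  rcases (g k).2 with hempty | hempty <;>
    rcases ha with ⟨ha, rfl | rfl | rfl⟩ <;> rcases hb with ⟨hb, rfl | rfl | rfl⟩ <;> simp_all

end kddUnion

theorem pow_le_kcount (d : ℕ) : (2 ^ (d + 1) - 1) ^ d ≤ Kcount d := by
  have hcard : Fintype.card (Fin d → KddIndepSet d) = (2 ^ (d + 1) - 1) ^ d := by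
    simp [card_kddIndepSet]
  rw [← hcard, ← card_univ]
  exact card_le_card_of_injOn (kddUnion d)
    (fun g _ => mem_filter.2 ⟨mem_univ _, fun _ => card_inter_kddUnion_le_one g⟩)
    kddUnion_injective.injOn

theorem two_pow_sub_one_pow_le_kcount (d : ℕ) : ((2 : ℝ) ^ (d + 1) - 1) ^ d ≤ Kcount d := by
  have h := pow_le_kcount d
  rw [← Nat.cast_le (α := ℝ), Nat.cast_pow, Nat.cast_sub Nat.one_le_two_pow] at h
  exact_mod_cast h

-- `2 ^ (d + 1) - 1 ≥ 2 ^ (d + 1/2)`, squared to stay within natural exponents.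
theorem two_pow_le_sq_two_pow_sub_one {d : ℕ} (hd : 1 ≤ d) :
    (2 : ℝ) ^ (2 * d + 1) ≤ ((2 : ℝ) ^ (d + 1) - 1) ^ 2 := by
  have hx : (2 : ℝ) ≤ 2 ^ d := by simpa using pow_le_pow_right₀ (by norm_num : (1 : ℝ) ≤ 2) hd
  have h1 : (2 : ℝ) ^ (2 * d + 1) = 2 * (2 ^ d) ^ 2 := by ring
  have h2 : (2 : ℝ) ^ (d + 1) = 2 * 2 ^ d := by ring
  rw [h1, h2]
  nlinarith

theorem le_logb_kcount {d : ℕ} (hd : 1 ≤ d) :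
    ((d : ℝ) + 1 / 2) * d ≤ Real.logb 2 (Kcount d) := by
  have hsq : (2 : ℝ) ^ ((2 * d + 1) * d) ≤ (Kcount d : ℝ) ^ 2 :=
    calc (2 : ℝ) ^ ((2 * d + 1) * d) ≤ (((2 : ℝ) ^ (d + 1) - 1) ^ 2) ^ d := by
          rw [pow_mul]; gcongr; exact two_pow_le_sq_two_pow_sub_one hd
      _ = (((2 : ℝ) ^ (d + 1) - 1) ^ d) ^ 2 := by rw [← pow_mul, ← pow_mul, mul_comm]
      _ ≤ (Kcount d : ℝ) ^ 2 := by
          gcongr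
          · exact pow_nonneg (sub_nonneg.2 (one_le_pow₀ (by norm_num))) d
          · exact two_pow_sub_one_pow_le_kcount d
  have hlog := Real.logb_le_logb_of_le (b := 2) (by norm_num) (by positivity) hsq
  rw [Real.logb_pow, Real.logb_pow, Real.logb_self_eq_one (by norm_num)] at hlog
  push_cast at hlog
  linarith

theorem stmt_17 :
    (∀ d : ℕ, 2 ≤ d → (Kcount d : ℝ) ≥ ((2 : ℝ) ^ (d + 1) - 1) ^ d) ∧
    ∃ f : ℕ → ℝ, f =o[atTop] (fun d : ℕ => 1 / (d : ℝ)) ∧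
      ∀ d : ℕ, 2 ≤ d →
        Real.logb 2 (Kcount d) / (3 * (d : ℝ) ^ 2) ≥
          1 / 3 + 1 / (6 * (d : ℝ)) - f d := by
  refine ⟨fun d _ => two_pow_sub_one_pow_le_kcount d, fun _ => 0,
    Asymptotics.isLittleO_zero _ _, fun d hd => ?_⟩
  have hd0 : (0 : ℝ) < d := by exact_mod_cast (by omega : 0 < d)
  calc 1 / 3 + 1 / (6 * (d : ℝ)) - 0 = ((d : ℝ) + 1 / 2) * d / (3 * (d : ℝ) ^ 2) := by
        field_simp; ring
    _ ≤ Real.logb 2 (Kcount d) / (3 * (d : ℝ) ^ 2) := by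
        gcongr; exact le_logb_kcount (by omega)
end
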